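/- arXiv:1804.01516 — 6 statements merged into one kernel-verified Lean document; each statement's English description precedes it below -/
import Mathlib

section
/- Let E be a finite-dimensional real normed vector space and C ⊆ E a closed convex cone. Suppose there exists a continuous linear functional f₀ on E with f₀(x) > 0 for all x ∈ C \ {0}. Then the interior of the dual cone {f ∈ E →L[ℝ] ℝ : f(x) ≥ 0 for all x ∈ C} is nonempty and consists exactly of those continuous linear functionals f with f(x) > 0 for all x ∈ C \ {0}. -/
/-!
In any real normed space, `f` is interior to the dual cone of `C` iff `ε ‖x‖ ≤ f x` on `C` for
some `ε > 0`: such an `f` keeps a ball of radius `ε` inside the dual cone, and conversely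
subtracting a small multiple of a norming functional of `x` (Hahn–Banach) must stay in the dual
cone. For a closed cone in finite dimension, strict positivity on `C \ {0}` gives such an `ε`,
namely the minimum of `f` on the compact set `C ∩ sphere 0 1`.
-/

open Metric

section DualCone

variable {E : Type*} [NormedAddCommGroup E] [NormedSpace ℝ E]

theorem mem_interior_dualCone_iff (C : Set E) (f : E →L[ℝ] ℝ) :
    f ∈ interior {f : E →L[ℝ] ℝ | ∀ x ∈ C, 0 ≤ f x} ↔
      ∃ ε > 0, ∀ x ∈ C, ε * ‖x‖ ≤ f x := by
  rw [mem_interior_iff_mem_nhds, Metric.mem_nhds_iff]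
  constructor
  · rintro ⟨δ, hδ, hball⟩
    refine ⟨δ / 2, half_pos hδ, fun x hx => ?_⟩
    obtain ⟨g, hg_norm, hgx⟩ := exists_dual_vector'' ℝ x
    have hmem : f - (δ / 2) • g ∈ ball f δ := by
      rw [mem_ball, dist_eq_norm, sub_sub_cancel_left, norm_neg, norm_smul,
        Real.norm_of_nonneg (half_pos hδ).le]
      nlinarith [norm_nonneg g]
    simpa [hgx] using hball hmem x hx
  · rintro ⟨ε, hε, hf⟩
    refine ⟨ε, hε, fun g hg x hx => ?_⟩
    have hdist : ‖f - g‖ < ε := by rw [← dist_eq_norm, dist_comm]; exact hg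
    have hdiff : (f - g) x ≤ ‖f - g‖ * ‖x‖ := (Real.le_norm_self _).trans ((f - g).le_opNorm x)
    calc 0 ≤ (ε - ‖f - g‖) * ‖x‖ := mul_nonneg (sub_nonneg.mpr hdist.le) (norm_nonneg x)
      _ ≤ f x - (f - g) x := by linarith [hf x hx]
      _ = g x := by simp

theorem exists_pos_mul_norm_le_of_pos_on_cone [ProperSpace E] {C : Set E} (hC : IsClosed C)
    (hCcone : ∀ t : ℝ, 0 ≤ t → ∀ x ∈ C, t • x ∈ C) {f : E →L[ℝ] ℝ}
    (hf : ∀ x ∈ C, x ≠ 0 → 0 < f x) :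
    ∃ ε > 0, ∀ x ∈ C, ε * ‖x‖ ≤ f x := by
  have hK : IsCompact (C ∩ sphere (0 : E) 1) := (isCompact_sphere 0 1).inter_left hC
  obtain ⟨ε, hε, hεK⟩ := hK.exists_forall_le' f.continuous.continuousOn
    fun x hx => hf x hx.1 (ne_zero_of_mem_unit_sphere ⟨x, hx.2⟩)
  refine ⟨ε, hε, fun x hx => ?_⟩
  rcases eq_or_ne x 0 with rfl | hx0
  · simp
  have hnx : 0 < ‖x‖ := norm_pos_iff.mpr hx0
  have hu : ‖x‖⁻¹ • x ∈ C ∩ sphere (0 : E) 1 :=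
    ⟨hCcone _ (inv_nonneg.mpr hnx.le) x hx, by simp [norm_smul, hnx.ne']⟩
  have := hεK _ hu
  rwa [map_smul, smul_eq_mul, le_inv_mul_iff₀ hnx, mul_comm] at this

end DualCone

theorem interior_dualCone_general
    {E : Type*} [NormedAddCommGroup E] [NormedSpace ℝ E] [FiniteDimensional ℝ E]
    (C : Set E) (hCclosed : IsClosed C)
    (hCcone : ∀ t : ℝ, 0 ≤ t → ∀ x ∈ C, t • x ∈ C)
    (f₀ : E →L[ℝ] ℝ) (hf₀ : ∀ x ∈ C, x ≠ 0 → 0 < f₀ x) :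
    (interior {f : E →L[ℝ] ℝ | ∀ x ∈ C, 0 ≤ f x}).Nonempty ∧
      interior {f : E →L[ℝ] ℝ | ∀ x ∈ C, 0 ≤ f x}
        = {f : E →L[ℝ] ℝ | ∀ x ∈ C, x ≠ 0 → 0 < f x} := by
  have hEq : interior {f : E →L[ℝ] ℝ | ∀ x ∈ C, 0 ≤ f x}
      = {f : E →L[ℝ] ℝ | ∀ x ∈ C, x ≠ 0 → 0 < f x} := by
    ext f
    rw [mem_interior_dualCone_iff]
    refine ⟨fun ⟨ε, hε, hf⟩ x hx hx0 => ?_, exists_pos_mul_norm_le_of_pos_on_cone hCclosed hCcone⟩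
    exact (mul_pos hε (norm_pos_iff.mpr hx0)).trans_le (hf x hx)
  exact ⟨⟨f₀, hEq ▸ hf₀⟩, hEq⟩

/-- **Interior of the dual cone.**
Let `E` be a finite-dimensional real normed space and `C ⊆ E` a closed convex cone
admitting a continuous linear functional `f₀` strictly positive on `C \ {0}`.  Then the
interior of the dual cone `{f | ∀ x ∈ C, 0 ≤ f x}` in the continuous dual of `E` is
nonempty, and consists exactly of the continuous linear functionals strictly positive on
`C \ {0}`. -/
theorem interior_dualCone
    {E : Type*} [NormedAddCommGroup E] [NormedSpace ℝ E] [FiniteDimensional ℝ E]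
    (C : Set E) (hCclosed : IsClosed C) (hCconvex : Convex ℝ C)
    (hCcone : ∀ t : ℝ, 0 ≤ t → ∀ x ∈ C, t • x ∈ C)
    (f₀ : E →L[ℝ] ℝ) (hf₀ : ∀ x ∈ C, x ≠ 0 → 0 < f₀ x) :
    (interior {f : E →L[ℝ] ℝ | ∀ x ∈ C, 0 ≤ f x}).Nonempty ∧
      interior {f : E →L[ℝ] ℝ | ∀ x ∈ C, 0 ≤ f x}
        = {f : E →L[ℝ] ℝ | ∀ x ∈ C, x ≠ 0 → 0 < f x} :=
  interior_dualCone_general C hCclosed hCcone f₀ hf₀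
end

section
/- Let G be a Lie group and U ⊆ G an open connected subset with 1 ∈ U. Let z ∈ U and let a₁, …, aₙ ∈ U be invertible elements of U (i.e. aᵢ ∈ U and aᵢ⁻¹ ∈ U for each i). Then the U-word (z, a₁, …, aₙ, aₙ⁻¹, …, a₁⁻¹) can be transformed, using elementary expansions only, into a U-word of the form (b₁, …, b_m, b_m⁻¹, …, b₁⁻¹, z) where each bⱼ is an invertible element of U. -/
/-- Elementary contraction of a word over `U`: two adjacent letters `a, b ∈ U` are replaced
by the single letter `a * b`, provided `a * b ∈ U`. -/
def Contracts {G : Type*} [Group G] (U : Set G) (w w' : List G) : Prop :=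
  ∃ (l₁ l₂ : List G) (a b : G), a ∈ U ∧ b ∈ U ∧ a * b ∈ U ∧
    w = l₁ ++ a :: b :: l₂ ∧ w' = l₁ ++ (a * b) :: l₂

/-- Elementary expansion: the inverse operation of contraction. -/
def Expands {G : Type*} [Group G] (U : Set G) (w w' : List G) : Prop :=
  Contracts U w' w

/-- The block `(a₁, …, aₙ, aₙ⁻¹, …, a₁⁻¹)` built from the list `a = [a₁, …, aₙ]`. -/
def Block {G : Type*} [Group G] (a : List G) : List G :=
  a ++ (a.reverse.map fun x => x⁻¹)

/-!
Call `z ∈ U` *passing* if `z` can be moved to the right of every block by expansions. The letter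
`1` is passing: `(1, block)` expands to `(1, block, 1⁻¹, 1)`. If `z` is passing and `v, v⁻¹, vz ∈ U`,
then `vz` is passing: expand `vz` to `(v, z)`, move `z` past the block, and expand `z` to
`(v⁻¹, vz)`, which wraps the new block in `v, v⁻¹`. Applied with `v = y x⁻¹` and with its inverse,
for `y ∈ U` close to `x ∈ U`, this shows that the passing points form a relatively clopen subset
of `U`; it contains `1`, so it is all of `U` by connectedness.
-/

open Filter Topology

section

variable {G : Type*} [Group G] {U : Set G}

theorem Contracts.append_append (l r : List G) {w w' : List G} (h : Contracts U w w') :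
    Contracts U (l ++ w ++ r) (l ++ w' ++ r) := by
  obtain ⟨l₁, l₂, x, y, hx, hy, hxy, rfl, rfl⟩ := h
  exact ⟨l ++ l₁, l₂ ++ r, x, y, hx, hy, hxy, by simp, by simp⟩

theorem Expands.reflTransGen_append_append (l r : List G) {w w' : List G}
    (h : Relation.ReflTransGen (Expands U) w w') :
    Relation.ReflTransGen (Expands U) (l ++ w ++ r) (l ++ w' ++ r) :=
  h.lift (fun x => l ++ x ++ r) fun _ _ hx => hx.append_append l r

theorem expands_append_one (h1U : (1 : G) ∈ U) {w : List G} (hw : w ≠ [])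
    (hlast : w.getLast hw ∈ U) : Expands U w (w ++ [1]) :=
  ⟨w.dropLast, [], w.getLast hw, 1, hlast, h1U, by simpa using hlast,
    by nth_rw 1 [← List.dropLast_append_getLast hw]; simp,
    by rw [mul_one, List.dropLast_append_getLast]⟩

theorem mem_of_mem_block {a : List G} (ha : ∀ x ∈ a, x ∈ U ∧ x⁻¹ ∈ U) :
    ∀ x ∈ Block a, x ∈ U := by
  simp only [Block, List.mem_append, List.mem_map, List.mem_reverse]
  rintro _ (hx | ⟨x, hx, rfl⟩)
  exacts [(ha _ hx).1, (ha x hx).2]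

variable (U) in
def PassesBlocks (z : G) : Prop :=
  ∀ a : List G, (∀ x ∈ a, x ∈ U ∧ x⁻¹ ∈ U) →
    ∃ b : List G, (∀ x ∈ b, x ∈ U ∧ x⁻¹ ∈ U) ∧
      Relation.ReflTransGen (Expands U) (z :: Block a) (Block b ++ [z])

theorem passesBlocks_one (h1U : (1 : G) ∈ U) : PassesBlocks U (1 : G) := by
  intro a ha
  refine ⟨1 :: a, ?_, ?_⟩
  · exact List.forall_mem_cons.2 ⟨⟨h1U, by simpa using h1U⟩, ha⟩
  · have hlast : ((1 : G) :: Block a).getLast (List.cons_ne_nil _ _) ∈ U :=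
      List.forall_mem_cons.2 ⟨h1U, mem_of_mem_block ha⟩ _ (List.getLast_mem _)
    have hblock : Block ((1 : G) :: a) ++ [1] = (1 :: Block a) ++ [1] ++ [1] := by
      simp [Block]
    rw [hblock]
    exact .tail (.single (expands_append_one h1U _ hlast))
      (expands_append_one h1U (by simp) (by simpa using h1U))

theorem PassesBlocks.mul_left {z v : G} (h : PassesBlocks U z) (hz : z ∈ U) (hv : v ∈ U)
    (hv' : v⁻¹ ∈ U) (hvz : v * z ∈ U) : PassesBlocks U (v * z) := by
  intro a ha
  obtain ⟨b, hb, hmove⟩ := h a ha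
  refine ⟨v :: b, List.forall_mem_cons.2 ⟨⟨hv, hv'⟩, hb⟩, ?_⟩
  have hsplit : Expands U ((v * z) :: Block a) (v :: z :: Block a) :=
    ⟨[], Block a, v, z, hv, hz, hvz, rfl, rfl⟩
  have hpass : Relation.ReflTransGen (Expands U) (v :: z :: Block a) (v :: (Block b ++ [z])) := by
    simpa using Expands.reflTransGen_append_append [v] [] hmove
  have hwrap : Expands U (v :: (Block b ++ [z])) (Block (v :: b) ++ [v * z]) :=
    ⟨v :: Block b, [], v⁻¹, v * z, hv', hvz, by simpa using hz, by simp [Block], by simp [Block]⟩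
  exact ((Relation.ReflTransGen.single hsplit).trans hpass).tail hwrap

theorem passesBlocks_of_isPreconnected [TopologicalSpace G] [IsTopologicalGroup G]
    (hU : IsPreconnected U) (hU1 : U ∈ 𝓝 (1 : G)) {z : G} (hz : z ∈ U) :
    PassesBlocks U z := by
  have h1U : (1 : G) ∈ U := mem_of_mem_nhds hU1
  refine hU.induction₂' (fun x y => PassesBlocks U x → PassesBlocks U y) (fun x hx => ?_)
    (fun _ _ _ _ _ _ hxy hyz => hyz ∘ hxy) h1U hz (passesBlocks_one h1U)
  have hquot : Tendsto (fun y => y * x⁻¹) (𝓝[U] x) (𝓝 1) := by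
    simpa using ((continuous_mul_const x⁻¹).tendsto x).mono_left nhdsWithin_le_nhds
  filter_upwards [hquot (inter_mem hU1 (inv_mem_nhds_one G hU1)), self_mem_nhdsWithin]
    with y ⟨hyx, hyx'⟩ hy
  refine ⟨fun h => ?_, fun h => ?_⟩
  · simpa using h.mul_left hx hyx hyx' (by simpa using hy)
  · simpa using h.mul_left hy hyx' (by simpa using hyx) (by simpa using hx)

end

/-- **Moving a block past a letter using expansions only.**
Let `G` be a Lie group and `U ⊆ G` an open connected subset with `1 ∈ U`.  Let `z ∈ U` and
let `a₁, …, aₙ ∈ U` be invertible elements of `U`.  Then the word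
`(z, a₁, …, aₙ, aₙ⁻¹, …, a₁⁻¹)` can be transformed, using elementary expansions only, into a
word of the form `(b₁, …, b_m, b_m⁻¹, …, b₁⁻¹, z)` with each `bⱼ` invertible in `U`. -/
theorem block_switch
    {E : Type*} [NormedAddCommGroup E] [NormedSpace ℝ E]
    {H : Type*} [TopologicalSpace H] (I : ModelWithCorners ℝ E H)
    {G : Type*} [TopologicalSpace G] [ChartedSpace H G] [Group G] [LieGroup I (⊤ : ℕ∞) G]
    (U : Set G) (hUopen : IsOpen U) (hUconn : IsConnected U) (h1U : (1 : G) ∈ U)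
    (z : G) (hz : z ∈ U)
    (a : List G) (ha : ∀ x ∈ a, x ∈ U ∧ x⁻¹ ∈ U) :
    ∃ b : List G, (∀ x ∈ b, x ∈ U ∧ x⁻¹ ∈ U) ∧
      Relation.ReflTransGen (Expands U) (z :: Block a) (Block b ++ [z]) := by
  have : IsTopologicalGroup G := topologicalGroup_of_lieGroup I ((⊤ : ℕ∞) : WithTop ℕ∞)
  exact passesBlocks_of_isPreconnected hUconn.isPreconnected (hUopen.mem_nhds h1U) hz a ha
end

section
/- Let G be a Lie group and U ⊆ G an open connected subset with 1 ∈ U that has products connected to the axes. Let w and w' be U-words such that w' is an elementary contraction of w. Then there is a finite sequence of elementary expansions starting at w and ending at a U-word obtained from w' by inserting, at some position, a block (a₁, …, aₙ, aₙ⁻¹, …, a₁⁻¹) whose letters aᵢ are invertible elements of U. -/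
/-- `U` has products connected to the axes: for all `a, b ∈ U` with `a * b ∈ U` there is a
continuous path in `U` from `1` to `a` that can be right-translated by `b` within `U`, or a
continuous path in `U` from `1` to `b` that can be left-translated by `a` within `U`. -/
def ProductsConnectedToAxes {G : Type*} [Group G] [TopologicalSpace G] (U : Set G) : Prop :=
  ∀ a ∈ U, ∀ b ∈ U, a * b ∈ U →
    (∃ γ : Path (1 : G) a, ∀ t, γ t ∈ U ∧ γ t * b ∈ U) ∨
    (∃ δ : Path (1 : G) b, ∀ t, δ t ∈ U ∧ a * δ t ∈ U)

open Relation Filter Topology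
open scoped Pointwise

section Words

variable {G : Type*} [Group G] {U : Set G}

def invRev (w : List G) : List G :=
  (w.map (·⁻¹)).reverse

theorem Contracts.of_mul_eq {a b c : G} (ha : a ∈ U) (hb : b ∈ U) (hc : a * b = c) (hcU : c ∈ U)
    (l r : List G) : Contracts U (l ++ a :: b :: r) (l ++ c :: r) :=
  ⟨l, r, a, b, ha, hb, hc ▸ hcU, rfl, hc ▸ rfl⟩

theorem block_cons (c : G) (a : List G) : Block (c :: a) = c :: (Block a ++ [c⁻¹]) := by
  simp [Block]

theorem reflTransGen_contracts_block_cons {a : List G} {c h h' y : G}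
    (ha : ∀ l₁ l₂, ReflTransGen (Contracts U) (l₁ ++ Block a ++ (h * y) :: l₂) (l₁ ++ h :: y :: l₂))
    (hc : c ∈ U) (hc' : c⁻¹ ∈ U) (hch : c * h = h') (hh : h ∈ U) (hhy : h * y ∈ U)
    (hh' : h' ∈ U) (hh'y : h' * y ∈ U) (l₁ l₂ : List G) :
    ReflTransGen (Contracts U) (l₁ ++ Block (c :: a) ++ (h' * y) :: l₂) (l₁ ++ h' :: y :: l₂) := by
  have cancel : Contracts U ((l₁ ++ c :: Block a) ++ c⁻¹ :: (h' * y) :: l₂)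
      ((l₁ ++ [c]) ++ Block a ++ (h * y) :: l₂) := by
    simpa using Contracts.of_mul_eq hc' hh'y (by rw [← hch]; group) hhy (l₁ ++ c :: Block a) l₂
  have merge : Contracts U ((l₁ ++ [c]) ++ h :: y :: l₂) (l₁ ++ h' :: y :: l₂) := by
    simpa using Contracts.of_mul_eq hc hh hch hh' l₁ (y :: l₂)
  have hsplit : l₁ ++ Block (c :: a) ++ (h' * y) :: l₂
      = (l₁ ++ c :: Block a) ++ c⁻¹ :: (h' * y) :: l₂ := by
    simp [block_cons]
  rw [hsplit]
  exact .head cancel ((ha _ _).tail merge)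

theorem exists_block_reflTransGen_contracts {T : Set G} {x y : G} (h1 : (1 : G) ∈ T)
    (hTU : ∀ g ∈ T, g ∈ U ∧ g * y ∈ U)
    (hx : ReflTransGen (fun g g' => g ∈ T ∧ g' ∈ T ∧ g' * g⁻¹ ∈ U ∩ U⁻¹) 1 x) :
    ∃ a : List G, (∀ c ∈ a, c ∈ U ∧ c⁻¹ ∈ U) ∧ ∀ l₁ l₂,
      ReflTransGen (Contracts U) (l₁ ++ Block a ++ (x * y) :: l₂) (l₁ ++ x :: y :: l₂) := by
  induction hx with
  | refl =>
    obtain ⟨h1U, hy⟩ := hTU 1 h1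
    rw [one_mul] at hy
    -- `Block []` would not do: contractions never lengthen `(y)` to `(1, y)`.
    refine ⟨[1], by simpa using h1U, fun l₁ l₂ => .single ?_⟩
    have hmerge := Contracts.of_mul_eq h1U hy (one_mul y) hy (l₁ ++ [1]) l₂
    simpa [Block, List.append_assoc] using hmerge
  | @tail h h' _ hstep ih =>
    obtain ⟨a, ha, hred⟩ := ih
    obtain ⟨hT, hT', hc, hc'⟩ := hstep
    exact ⟨(h' * h⁻¹) :: a, List.forall_mem_cons.2 ⟨⟨hc, hc'⟩, ha⟩,
      reflTransGen_contracts_block_cons hred hc hc' (inv_mul_cancel_right h' h)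
        (hTU h hT).1 (hTU h hT).2 (hTU h' hT').1 (hTU h' hT').2⟩

theorem Contracts.invRev {w w' : List G} (h : Contracts U w w') :
    Contracts U⁻¹ (invRev w) (invRev w') := by
  obtain ⟨l, r, a, b, ha, hb, hab, rfl, rfl⟩ := h
  refine ⟨_root_.invRev r, _root_.invRev l, b⁻¹, a⁻¹, by simpa, by simpa, by simpa using hab,
    ?_, ?_⟩ <;> simp [_root_.invRev]

end Words

section Topology

variable {G : Type*} [TopologicalSpace G] [Group G] [IsTopologicalGroup G]

theorem IsPreconnected.reflTransGen_mul_inv_mem {T V : Set G} (hT : IsPreconnected T)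
    (hV : V ∈ 𝓝 1) {x x' : G} (hx : x ∈ T) (hx' : x' ∈ T) :
    ReflTransGen (fun g g' => g ∈ T ∧ g' ∈ T ∧ g' * g⁻¹ ∈ V) x x' := by
  refine hT.induction₂' _ (fun g hg => ?_) (fun _ _ _ _ _ _ h h' => h.trans h') hx hx'
  have hright : ∀ᶠ g' in 𝓝 g, g' * g⁻¹ ∈ V :=
    (continuous_mul_const g⁻¹).tendsto' g 1 (mul_inv_cancel g) hV
  have hleft : ∀ᶠ g' in 𝓝 g, g * g'⁻¹ ∈ V :=
    (continuous_const.mul continuous_inv).tendsto' g 1 (mul_inv_cancel g) hV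
  filter_upwards [nhdsWithin_le_nhds hright, nhdsWithin_le_nhds hleft, self_mem_nhdsWithin]
    with g' h₁ h₂ hg'
  exact ⟨.single ⟨hg, hg', h₁⟩, .single ⟨hg', hg, h₂⟩⟩

theorem exists_block_expands_of_mul_mem_left {U T : Set G} (hU : U ∈ 𝓝 1)
    (hT : IsPreconnected T) (h1 : (1 : G) ∈ T) {x y : G} (hx : x ∈ T)
    (hTU : ∀ g ∈ T, g ∈ U ∧ g * y ∈ U) (l₁ l₂ : List G) :
    ∃ a : List G, (∀ c ∈ a, c ∈ U ∧ c⁻¹ ∈ U) ∧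
      ReflTransGen (Expands U) (l₁ ++ x :: y :: l₂) (l₁ ++ Block a ++ (x * y) :: l₂) := by
  have hchain := hT.reflTransGen_mul_inv_mem (inter_mem hU (inv_mem_nhds_one G hU)) h1 hx
  obtain ⟨a, ha, hred⟩ := exists_block_reflTransGen_contracts h1 hTU hchain
  exact ⟨a, ha, (hred l₁ l₂).swap⟩

/-- `invRev` turns this case into the previous one for `U⁻¹` and `T⁻¹`, and it fixes blocks. -/
theorem exists_block_expands_of_mul_mem_right {U T : Set G} (hU : U ∈ 𝓝 1)
    (hT : IsPreconnected T) (h1 : (1 : G) ∈ T) {x y : G} (hy : y ∈ T)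
    (hTU : ∀ g ∈ T, g ∈ U ∧ x * g ∈ U) (l₁ l₂ : List G) :
    ∃ a : List G, (∀ c ∈ a, c ∈ U ∧ c⁻¹ ∈ U) ∧
      ReflTransGen (Expands U) (l₁ ++ x :: y :: l₂) (l₁ ++ (x * y) :: Block a ++ l₂) := by
  have hT' : IsPreconnected T⁻¹ := by
    simpa only [Set.image_inv_eq_inv] using hT.image _ continuous_inv.continuousOn
  obtain ⟨a, ha, hexp⟩ := exists_block_expands_of_mul_mem_left (U := U⁻¹) (x := y⁻¹) (y := x⁻¹)
    (inv_mem_nhds_one G hU) hT' (by simpa) (by simpa)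
    (fun g hg => by simpa [mul_inv_rev] using hTU g⁻¹ hg) (invRev l₂) (invRev l₁)
  refine ⟨a, fun c hc => by simpa [and_comm] using ha c hc, ?_⟩
  have hexp' := hexp.lift (p := Expands U⁻¹⁻¹) invRev fun _ _ h => h.invRev
  rw [inv_inv] at hexp'
  simpa [Function.onFun, invRev, Block] using hexp'

end Topology

theorem contraction_into_expansions_general
    {E : Type*} [NormedAddCommGroup E] [NormedSpace ℝ E]
    {H : Type*} [TopologicalSpace H] (I : ModelWithCorners ℝ E H)
    {G : Type*} [TopologicalSpace G] [ChartedSpace H G] [Group G] [LieGroup I (⊤ : ℕ∞) G]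
    (U : Set G) (hUopen : IsOpen U) (h1U : (1 : G) ∈ U)
    (haxes : ProductsConnectedToAxes U)
    (w w' : List G)
    (hcontr : Contracts U w w') :
    ∃ (l₁ l₂ : List G) (a : List G), w' = l₁ ++ l₂ ∧
      (∀ x ∈ a, x ∈ U ∧ x⁻¹ ∈ U) ∧
      Relation.ReflTransGen (Expands U) w (l₁ ++ Block a ++ l₂) := by
  have : IsTopologicalGroup G := topologicalGroup_of_lieGroup I (⊤ : ℕ∞)
  have hU : U ∈ 𝓝 (1 : G) := hUopen.mem_nhds h1U
  obtain ⟨l₁, l₂, x, y, hx, hy, hxy, rfl, rfl⟩ := hcontr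
  rcases haxes x hx y hy hxy with ⟨γ, hγ⟩ | ⟨δ, hδ⟩
  · obtain ⟨a, ha, hexp⟩ := exists_block_expands_of_mul_mem_left hU
      (isConnected_range γ.continuous).isPreconnected ⟨0, γ.source⟩ ⟨1, γ.target⟩
      (Set.forall_mem_range.2 hγ) l₁ l₂
    exact ⟨l₁, (x * y) :: l₂, a, rfl, ha, by simpa using hexp⟩
  · obtain ⟨a, ha, hexp⟩ := exists_block_expands_of_mul_mem_right hU
      (isConnected_range δ.continuous).isPreconnected ⟨0, δ.source⟩ ⟨1, δ.target⟩
      (Set.forall_mem_range.2 hδ) l₁ l₂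
    exact ⟨l₁ ++ [x * y], l₂, a, by simp, ha, by simpa using hexp⟩

/-- **Turning a contraction into expansions at the cost of an inserted block.**
Let `G` be a Lie group and `U ⊆ G` an open connected subset with `1 ∈ U` that has products
connected to the axes.  Let `w, w'` be `U`-words such that `w'` is an elementary contraction
of `w`.  Then there is a sequence of elementary expansions starting at `w` and ending at a
word obtained from `w'` by inserting, at some position, a block whose letters are invertible
elements of `U`. -/
theorem contraction_into_expansions
    {E : Type*} [NormedAddCommGroup E] [NormedSpace ℝ E]
    {H : Type*} [TopologicalSpace H] (I : ModelWithCorners ℝ E H)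
    {G : Type*} [TopologicalSpace G] [ChartedSpace H G] [Group G] [LieGroup I (⊤ : ℕ∞) G]
    (U : Set G) (hUopen : IsOpen U) (hUconn : IsConnected U) (h1U : (1 : G) ∈ U)
    (haxes : ProductsConnectedToAxes U)
    (w w' : List G) (hw : ∀ x ∈ w, x ∈ U) (hw' : ∀ x ∈ w', x ∈ U)
    (hcontr : Contracts U w w') :
    ∃ (l₁ l₂ : List G) (a : List G), w' = l₁ ++ l₂ ∧
      (∀ x ∈ a, x ∈ U ∧ x⁻¹ ∈ U) ∧
      Relation.ReflTransGen (Expands U) w (l₁ ++ Block a ++ l₂) :=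
  contraction_into_expansions_general I U hUopen h1U haxes w w' hcontr
end

section
/- Let G be a Lie group, U ⊆ G an open connected subset with 1 ∈ U, and W ⊆ U a neighborhood of 1 in G. Then for every g ∈ U there exist n ≥ 1 and elements h₁, …, hₙ ∈ W such that every partial product hₖ * hₖ₋₁ * ⋯ * h₁ (for 1 ≤ k ≤ n) lies in U, and hₙ * hₙ₋₁ * ⋯ * h₁ = g. -/
/-!
Call `g ∈ U` reachable if it is a well-defined product of elements of `W`. If `g` is reachable,
so is every `h ∈ U ∩ W g`, as `h = (h g⁻¹) g`; so the reachable set is open. If `g ∈ U` is not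
reachable, neither is any `h ∈ U` with `g ∈ W h`, and these form a neighborhood of `g`; so the
unreachable part of `U` is open as well. Since `1` is reachable and `U` is connected, all of `U`
is reachable.
-/

open Topology

section LocalWords

variable {G : Type*} [Group G]

def localWordProducts (U W : Set G) : Set G :=
  {g | ∃ l : List G, l ≠ [] ∧ (∀ x ∈ l, x ∈ W) ∧
    (∀ k : ℕ, 1 ≤ k → k ≤ l.length → ((l.take k).reverse).prod ∈ U) ∧ l.reverse.prod = g}

variable {U W : Set G} {g w : G}

theorem one_mem_localWordProducts (h1U : (1 : G) ∈ U) (h1W : (1 : G) ∈ W) :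
    (1 : G) ∈ localWordProducts U W := by
  refine ⟨[1], List.cons_ne_nil _ _, by simpa using h1W, fun k hk1 hk => ?_, by simp⟩
  obtain rfl : k = 1 := le_antisymm hk hk1
  simpa using h1U

theorem localWordProducts_subset : localWordProducts U W ⊆ U := by
  rintro _ ⟨l, hne, -, hlU, rfl⟩
  simpa using hlU l.length (List.length_pos_iff.2 hne) le_rfl

theorem mul_mem_localWordProducts (hg : g ∈ localWordProducts U W) (hw : w ∈ W)
    (hwg : w * g ∈ U) : w * g ∈ localWordProducts U W := by
  obtain ⟨l, -, hlW, hlU, rfl⟩ := hg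
  refine ⟨l ++ [w], by simp, ?_, fun k hk1 hk => ?_, by simp⟩
  · simpa [or_imp, forall_and] using And.intro hlW hw
  · rw [List.length_append, List.length_singleton] at hk
    rcases Nat.lt_or_eq_of_le hk with hk | rfl
    · have hkl : k ≤ l.length := Nat.lt_succ_iff.1 hk
      simpa [List.take_append, Nat.sub_eq_zero_of_le hkl] using hlU k hk1 hkl
    · simpa [List.take_of_length_le] using hwg

section Topology

variable [TopologicalSpace G] [IsTopologicalGroup G]

theorem isOpen_localWordProducts (hU : IsOpen U) (hW : W ∈ 𝓝 (1 : G)) :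
    IsOpen (localWordProducts U W) := by
  refine isOpen_iff_mem_nhds.2 fun g hg => ?_
  have hgW : ∀ᶠ h in 𝓝 g, h * g⁻¹ ∈ W :=
    ((continuous_mul_const g⁻¹).tendsto' g 1 (mul_inv_cancel g)).eventually_mem hW
  filter_upwards [hgW, hU.mem_nhds (localWordProducts_subset hg)] with h hhW hhU
  simpa using mul_mem_localWordProducts hg hhW (by simpa using hhU)

theorem isOpen_diff_localWordProducts (hU : IsOpen U) (hW : W ∈ 𝓝 (1 : G)) :
    IsOpen (U \ localWordProducts U W) := by
  refine isOpen_iff_mem_nhds.2 fun g ⟨hgU, hg⟩ => ?_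
  have hgW : ∀ᶠ h in 𝓝 g, g * h⁻¹ ∈ W :=
    ((continuous_const.mul continuous_inv).tendsto' g 1 (mul_inv_cancel g)).eventually_mem hW
  filter_upwards [hgW, hU.mem_nhds hgU] with h hhW hhU
  exact ⟨hhU, fun hh => hg (by simpa using mul_mem_localWordProducts hh hhW (by simpa using hgU))⟩

theorem IsPreconnected.subset_localWordProducts (hU : IsOpen U) (hUc : IsPreconnected U)
    (h1U : (1 : G) ∈ U) (hW : W ∈ 𝓝 (1 : G)) : U ⊆ localWordProducts U W :=
  hUc.subset_left_of_subset_union (isOpen_localWordProducts hU hW)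
    (isOpen_diff_localWordProducts hU hW) Set.disjoint_sdiff_right
    (by rw [Set.union_sdiff_self]; exact Set.subset_union_right)
    ⟨1, h1U, one_mem_localWordProducts h1U (mem_of_mem_nhds hW)⟩

end Topology

end LocalWords

theorem neighborhood_generates_general
    {E : Type*} [NormedAddCommGroup E] [NormedSpace ℝ E]
    {H : Type*} [TopologicalSpace H] (I : ModelWithCorners ℝ E H)
    {G : Type*} [TopologicalSpace G] [ChartedSpace H G] [Group G] [LieGroup I (⊤ : ℕ∞) G]
    (U : Set G) (hUopen : IsOpen U) (hUconn : IsConnected U) (h1U : (1 : G) ∈ U)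
    (W : Set G) (hW : W ∈ nhds (1 : G)) :
    ∀ g ∈ U, ∃ l : List G, l ≠ [] ∧ (∀ x ∈ l, x ∈ W) ∧
      (∀ k : ℕ, 1 ≤ k → k ≤ l.length → ((l.take k).reverse).prod ∈ U) ∧
      l.reverse.prod = g := by
  have : IsTopologicalGroup G := topologicalGroup_of_lieGroup I (⊤ : ℕ∞)
  exact hUconn.isPreconnected.subset_localWordProducts hUopen h1U hW

/-- **A neighborhood of the identity generates a connected local Lie group.**
Let `G` be a Lie group, `U ⊆ G` an open connected subset with `1 ∈ U`, and `W ⊆ U` a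
neighborhood of `1` in `G`.  Then every `g ∈ U` can be written as a well-defined iterated
product `hₙ * ⋯ * h₁` of elements of `W` (`n ≥ 1`), all of whose partial products
`hₖ * ⋯ * h₁` lie in `U`. -/
theorem neighborhood_generates
    {E : Type*} [NormedAddCommGroup E] [NormedSpace ℝ E]
    {H : Type*} [TopologicalSpace H] (I : ModelWithCorners ℝ E H)
    {G : Type*} [TopologicalSpace G] [ChartedSpace H G] [Group G] [LieGroup I (⊤ : ℕ∞) G]
    (U : Set G) (hUopen : IsOpen U) (hUconn : IsConnected U) (h1U : (1 : G) ∈ U)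
    (W : Set G) (hW : W ∈ nhds (1 : G)) (hWU : W ⊆ U) :
    ∀ g ∈ U, ∃ l : List G, l ≠ [] ∧ (∀ x ∈ l, x ∈ W) ∧
      (∀ k : ℕ, 1 ≤ k → k ≤ l.length → ((l.take k).reverse).prod ∈ U) ∧
      l.reverse.prod = g :=
  neighborhood_generates_general I U hUopen hUconn h1U W hW
end

section
/- Let G be a simply connected Lie group and U ⊆ G an open connected subset containing 1. If g₁, …, gₙ ∈ U are such that their product g = g₁ * g₂ * ⋯ * gₙ lies in U, then the U-words (g₁, …, gₙ) and (g) are equivalent. -/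
/-- Two `U`-words are equivalent if one is obtained from the other by a finite sequence of
elementary expansions and contractions. -/
def WordEquiv {G : Type*} [Group G] (U : Set G) : List G → List G → Prop :=
  Relation.ReflTransGen (fun w w' => Contracts U w w' ∨ Expands U w w')

/-!
Choose for every `g ∈ U` a path `σ g` from `1` to `g` inside `U`. Sampling a path `γ` at the
points `j / n` gives the word of its increments `(γ (j / n))⁻¹ * γ ((j + 1) / n)`, whose letters
lie in `U` once `n` is large (uniform continuity). If `γ` stays in `U`, all partial products
`γ (j / n)` of this word lie in `U`, so it contracts to its endpoint. Concatenating the translates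
`g₁ ⋯ gᵢ₋₁ • σ gᵢ` gives a path from `1` to `g` whose sampled word contracts block by block to
`(g₁, …, gₙ)`. As `G` is simply connected this path is homotopic to `σ g`, and at a fine mesh the
words sampled along two neighbouring rows of the homotopy are related by a staircase of elementary
moves. A Lie group is locally path-connected, so the open connected set `U` is path-connected.
-/

open Filter Topology Set Uniformity

section Words

variable {G : Type*} [Group G] {U : Set G} {w w' : List G}

theorem Contracts.append (h : Contracts U w w') (x y : List G) :
    Contracts U (x ++ w ++ y) (x ++ w' ++ y) := by
  obtain ⟨l₁, l₂, a, b, ha, hb, hab, rfl, rfl⟩ := h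
  exact ⟨x ++ l₁, l₂ ++ y, a, b, ha, hb, hab, by simp, by simp⟩

namespace WordEquiv

@[refl]
theorem refl (w : List G) : WordEquiv U w w := Relation.ReflTransGen.refl

@[symm]
theorem symm (h : WordEquiv U w w') : WordEquiv U w' w := by
  induction h with
  | refl => exact refl _
  | tail _ step ih => exact ih.head step.symm

theorem trans {w'' : List G} (h : WordEquiv U w w') (h' : WordEquiv U w' w'') :
    WordEquiv U w w'' :=
  Relation.ReflTransGen.trans h h'

instance : Trans (WordEquiv U) (WordEquiv U) (WordEquiv U) := ⟨trans⟩

theorem of_contracts (h : Contracts U w w') : WordEquiv U w w' :=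
  Relation.ReflTransGen.single (Or.inl h)

theorem of_expands (h : Contracts U w' w) : WordEquiv U w w' :=
  Relation.ReflTransGen.single (Or.inr h)

theorem append_append (h : WordEquiv U w w') (x y : List G) :
    WordEquiv U (x ++ w ++ y) (x ++ w' ++ y) :=
  Relation.ReflTransGen.lift (fun v => x ++ v ++ y)
    (fun _ _ => Or.imp (Contracts.append · x y) (Contracts.append · x y)) _ _ h

theorem append {v v' : List G} (h : WordEquiv U w w') (h' : WordEquiv U v v') :
    WordEquiv U (w ++ v) (w' ++ v') := by
  have h₁ := h.append_append [] v
  have h₂ := h'.append_append w' []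
  simp only [List.nil_append, List.append_nil] at h₁ h₂
  exact h₁.trans h₂

end WordEquiv

end Words

section StepWord

variable {G : Type*} [Group G] {U : Set G} {a b : ℕ → G} {n : ℕ}

def stepWord (a : ℕ → G) (n : ℕ) : List G :=
  (List.range n).map fun j => (a j)⁻¹ * a (j + 1)

@[simp]
theorem stepWord_zero : stepWord a 0 = [] := rfl

theorem stepWord_succ : stepWord a (n + 1) = stepWord a n ++ [(a n)⁻¹ * a (n + 1)] := by
  simp [stepWord, List.range_succ]

theorem stepWord_succ' :
    stepWord a (n + 1) = (a 0)⁻¹ * a 1 :: stepWord (fun j => a (j + 1)) n := by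
  simp [stepWord, List.range_succ_eq_map]

theorem stepWord_add (m : ℕ) :
    stepWord a (m + n) = stepWord a m ++ stepWord (fun j => a (m + j)) n := by
  simp [stepWord, List.range_add, add_assoc]

theorem stepWord_mul_left (g : G) : stepWord (fun j => g * a j) n = stepWord a n := by
  simp [stepWord, mul_assoc]

theorem stepWord_congr (h : ∀ j ≤ n, a j = b j) : stepWord a n = stepWord b n :=
  List.map_congr_left fun j hj => by
    rw [List.mem_range] at hj
    rw [h j hj.le, h (j + 1) hj]

theorem stepWord_wordEquiv_singleton (hn : n ≠ 0) (hstep : ∀ j < n, (a j)⁻¹ * a (j + 1) ∈ U)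
    (hfrom : ∀ j ≤ n, (a 0)⁻¹ * a j ∈ U) : WordEquiv U (stepWord a n) [(a 0)⁻¹ * a n] := by
  induction n with
  | zero => exact absurd rfl hn
  | succ n ih =>
    rcases eq_or_ne n 0 with rfl | hn
    · rfl
    have hprod : (a 0)⁻¹ * a n * ((a n)⁻¹ * a (n + 1)) = (a 0)⁻¹ * a (n + 1) := by group
    have hcontr : Contracts U [(a 0)⁻¹ * a n, (a n)⁻¹ * a (n + 1)] [(a 0)⁻¹ * a (n + 1)] :=
      ⟨[], [], _, _, hfrom n (by omega), hstep n (by omega), hprod ▸ hfrom (n + 1) le_rfl, rfl,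
        by rw [hprod]; rfl⟩
    rw [stepWord_succ]
    exact ((ih hn (fun j hj => hstep j (by omega)) (fun j hj => hfrom j (by omega))).append
      (WordEquiv.refl _)).trans (WordEquiv.of_contracts hcontr)

/-- The connectors `c j = (b j)⁻¹ * a j` satisfy `c j * ((a j)⁻¹ * a (j + 1)) =
((b j)⁻¹ * b (j + 1)) * c (j + 1)`, so one contraction and one expansion move the connector one
step to the right, trading a letter of `a` for the corresponding letter of `b`. -/
theorem cons_stepWord_wordEquiv (ha : ∀ j < n, (a j)⁻¹ * a (j + 1) ∈ U)
    (hb : ∀ j < n, (b j)⁻¹ * b (j + 1) ∈ U) (hba : ∀ j ≤ n, (b j)⁻¹ * a j ∈ U)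
    (hba' : ∀ j < n, (b j)⁻¹ * a (j + 1) ∈ U) :
    WordEquiv U ((b 0)⁻¹ * a 0 :: stepWord a n) (stepWord b n ++ [(b n)⁻¹ * a n]) := by
  induction n generalizing a b with
  | zero => rfl
  | succ n ih =>
    have hsquare : (b 0)⁻¹ * a 0 * ((a 0)⁻¹ * a 1) = (b 0)⁻¹ * b 1 * ((b 1)⁻¹ * a 1) := by group
    have hdiag : (b 0)⁻¹ * b 1 * ((b 1)⁻¹ * a 1) ∈ U := by
      rw [← hsquare]; simpa using hba' 0 (by omega)
    set t := stepWord (fun j => a (j + 1)) n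
    have hcontr : Contracts U ((b 0)⁻¹ * a 0 :: (a 0)⁻¹ * a 1 :: t)
        ((b 0)⁻¹ * b 1 * ((b 1)⁻¹ * a 1) :: t) :=
      ⟨[], _, _, _, hba 0 (by omega), ha 0 (by omega), hsquare ▸ hdiag, rfl, by rw [hsquare]; rfl⟩
    have hexp : Contracts U ((b 0)⁻¹ * b 1 :: (b 1)⁻¹ * a 1 :: t)
        ((b 0)⁻¹ * b 1 * ((b 1)⁻¹ * a 1) :: t) :=
      ⟨[], _, _, _, hb 0 (by omega), hba 1 (by omega), hdiag, rfl, rfl⟩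
    have hrest := ih (a := fun j => a (j + 1)) (b := fun j => b (j + 1))
      (fun j hj => ha (j + 1) (by omega)) (fun j hj => hb (j + 1) (by omega))
      (fun j hj => hba (j + 1) (by omega)) (fun j hj => hba' (j + 1) (by omega))
    rw [stepWord_succ', stepWord_succ']
    exact (WordEquiv.of_contracts hcontr).trans <| (WordEquiv.of_expands hexp).trans <|
      (WordEquiv.refl [(b 0)⁻¹ * b 1]).append hrest

theorem stepWord_wordEquiv_stepWord (h1 : (1 : G) ∈ U) (hn : n ≠ 0) (h0 : a 0 = b 0)
    (hn' : a n = b n) (ha : ∀ j < n, (a j)⁻¹ * a (j + 1) ∈ U)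
    (hb : ∀ j < n, (b j)⁻¹ * b (j + 1) ∈ U) (hba : ∀ j ≤ n, (b j)⁻¹ * a j ∈ U)
    (hba' : ∀ j < n, (b j)⁻¹ * a (j + 1) ∈ U) :
    WordEquiv U (stepWord a n) (stepWord b n) := by
  obtain ⟨n, rfl⟩ : ∃ m, n = m + 1 := ⟨n - 1, by omega⟩
  have hstair := cons_stepWord_wordEquiv ha hb hba hba'
  simp only [h0, hn', inv_mul_cancel] at hstair
  have hstart : Contracts U (1 :: stepWord a (n + 1)) (stepWord a (n + 1)) := by
    rw [stepWord_succ']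
    exact ⟨[], _, 1, _, h1, ha 0 (by omega), by simpa using ha 0 (by omega), rfl, by simp⟩
  have hend : Contracts U (stepWord b (n + 1) ++ [1]) (stepWord b (n + 1)) := by
    rw [stepWord_succ]
    exact ⟨stepWord b n, [], _, 1, hb n (by omega), h1, by simpa using hb n (by omega),
      by simp, by simp⟩
  exact (WordEquiv.of_expands hstart).trans <| hstair.trans (WordEquiv.of_contracts hend)

end StepWord

section Paths

variable {G : Type*} [Group G] [TopologicalSpace G] {U : Set G}

theorem exists_pos_forall_dist_lt_inv_mul_mem [IsTopologicalGroup G] {X : Type*}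
    [PseudoMetricSpace X] [CompactSpace X] {f : X → G} (hf : Continuous f) (hU : U ∈ 𝓝 1) :
    ∃ δ > 0, ∀ x y, dist x y < δ → (f x)⁻¹ * f y ∈ U := by
  have hdiag : (fun p : X × X => (f p.1)⁻¹ * f p.2) ⁻¹' U ∈ 𝓤 X := by
    rw [← nhdsSet_diagonal_eq_uniformity, mem_nhdsSet_iff_forall]
    rintro ⟨x, y⟩ (rfl : x = y)
    exact (by fun_prop : Continuous fun p : X × X => (f p.1)⁻¹ * f p.2).continuousAt
      |>.preimage_mem_nhds (by simpa using hU)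
  obtain ⟨δ, hδ, h⟩ := Metric.mem_uniformity_dist.1 hdiag
  exact ⟨δ, hδ, fun x y hxy => h hxy⟩

theorem dist_projIcc_le {a b : ℝ} (h : a ≤ b) (s t : ℝ) :
    dist (projIcc a b h s) (projIcc a b h t) ≤ dist s t := by
  simpa using (LipschitzWith.projIcc h).dist_le_mul s t

theorem dist_natCast_div_succ (j n : ℕ) :
    dist ((j : ℝ) / n) (((j + 1 : ℕ) : ℝ) / n) = 1 / n := by
  rw [Real.dist_eq, ← sub_div, abs_div, Nat.abs_cast]
  push_cast
  simp

noncomputable def pathWord {x y : G} (γ : Path x y) (n : ℕ) : List G :=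
  stepWord (fun j => γ.extend (j / n)) n

theorem eventually_pathWord_wordEquiv_singleton [IsTopologicalGroup G] {y : G} (γ : Path 1 y)
    (hγ : ∀ t, γ t ∈ U) (hU : U ∈ 𝓝 1) : ∀ᶠ n in atTop, WordEquiv U (pathWord γ n) [y] := by
  obtain ⟨δ, hδ, hγδ⟩ := exists_pos_forall_dist_lt_inv_mul_mem γ.continuous hU
  filter_upwards [eventually_ne_atTop 0,
    tendsto_one_div_atTop_nhds_zero_nat.eventually (gt_mem_nhds hδ)] with n hn hnδ
  have hstep : ∀ j < n, (γ.extend (j / n))⁻¹ * γ.extend (((j + 1 : ℕ) : ℝ) / n) ∈ U :=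
    fun j _ => hγδ _ _ <| (dist_projIcc_le zero_le_one _ _).trans_lt <|
      (dist_natCast_div_succ j n).trans_lt hnδ
  have hmem (j : ℕ) : γ.extend (j / n) ∈ U := hγ _
  have := stepWord_wordEquiv_singleton hn hstep fun j _ => by simpa using hmem j
  simpa [pathWord, hn] using this

theorem eventually_pathWord_wordEquiv [IsTopologicalGroup G] {x y : G} {p q : Path x y}
    (F : p.Homotopy q) (hU : U ∈ 𝓝 1) :
    ∀ᶠ n in atTop, WordEquiv U (pathWord p n) (pathWord q n) := by
  obtain ⟨δ, hδ, hFδ⟩ := exists_pos_forall_dist_lt_inv_mul_mem F.continuous hU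
  let row (s : ℝ) : Path x y := F.eval (projIcc 0 1 zero_le_one s)
  have hclose : ∀ s s' t t' : ℝ, dist s s' < δ → dist t t' < δ →
      ((row s).extend t)⁻¹ * (row s').extend t' ∈ U := fun s s' t t' hs ht =>
    hFδ _ _ <| by
      rw [Prod.dist_eq]
      exact max_lt ((dist_projIcc_le zero_le_one _ _).trans_lt hs)
        ((dist_projIcc_le zero_le_one _ _).trans_lt ht)
  filter_upwards [eventually_ne_atTop 0,
    tendsto_one_div_atTop_nhds_zero_nat.eventually (gt_mem_nhds hδ)] with n hn hnδ
  have hnext (j : ℕ) : dist ((j : ℝ) / n) (((j + 1 : ℕ) : ℝ) / n) < δ :=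
    (dist_natCast_div_succ j n).trans_lt hnδ
  have hprev (j : ℕ) : dist (((j + 1 : ℕ) : ℝ) / n) ((j : ℝ) / n) < δ :=
    (dist_comm _ _).trans_lt (hnext j)
  have hsame (j : ℕ) : dist ((j : ℝ) / n) ((j : ℝ) / n) < δ := by simpa using hδ
  have hadj (k : ℕ) :
      WordEquiv U (pathWord (row (k / n)) n) (pathWord (row ((k + 1 : ℕ) / n)) n) :=
    stepWord_wordEquiv_stepWord (mem_of_mem_nhds hU) hn (by simp) (by simp [hn])
      (fun j _ => hclose _ _ _ _ (hsame k) (hnext j))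
      (fun j _ => hclose _ _ _ _ (hsame (k + 1)) (hnext j))
      (fun j _ => hclose _ _ _ _ (hprev k) (hsame j))
      (fun j _ => hclose _ _ _ _ (hprev k) (hnext j))
  have hrows (k : ℕ) : WordEquiv U (pathWord (row 0) n) (pathWord (row (k / n)) n) := by
    induction k with
    | zero => simpa using WordEquiv.refl (pathWord (row 0) n)
    | succ k ih => exact ih.trans (hadj k)
  simpa [row, hn] using hrows n

end Paths

section WordPath

variable {G : Type*} [Group G] [TopologicalSpace G] {U : Set G}
  (σ : ∀ g : G, Path (1 : G) g)

/-- Runs through `σ g₁`, then `g₁ • σ g₂`, then `g₁ g₂ • σ g₃`, …, spending unit time on each. -/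
noncomputable def wordCurve : List G → ℝ → G
  | [] => fun _ => 1
  | g :: l => fun t => (σ g).extend t * wordCurve l (t - 1)

theorem continuous_wordCurve [ContinuousMul G] (l : List G) : Continuous (wordCurve σ l) := by
  induction l with
  | nil => exact continuous_const
  | cons g l ih => exact (σ g).continuous_extend.mul (ih.comp (by fun_prop))

theorem wordCurve_of_nonpos (l : List G) {t : ℝ} (ht : t ≤ 0) : wordCurve σ l t = 1 := by
  induction l generalizing t with
  | nil => rfl
  | cons g l ih => simp [wordCurve, (σ g).extend_of_le_zero ht, ih (by linarith : t - 1 ≤ 0)]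

theorem wordCurve_of_length_le (l : List G) {t : ℝ} (ht : l.length ≤ t) :
    wordCurve σ l t = l.prod := by
  induction l generalizing t with
  | nil => rfl
  | cons g l ih =>
    simp only [List.length_cons, Nat.cast_succ] at ht
    have h1 : 1 ≤ t := by linarith [(l.length.cast_nonneg : (0 : ℝ) ≤ l.length)]
    simp [wordCurve, (σ g).extend_of_one_le h1, ih (by linarith : (l.length : ℝ) ≤ t - 1)]

noncomputable def wordPath [ContinuousMul G] (l : List G) : Path (1 : G) l.prod where
  toFun t := wordCurve σ l (l.length * t)
  continuous_toFun := (continuous_wordCurve σ l).comp (by fun_prop)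
  source' := wordCurve_of_nonpos σ l (by simp)
  target' := wordCurve_of_length_le σ l (by simp)

theorem pathWord_wordPath [ContinuousMul G] (l : List G) (n : ℕ) :
    pathWord (wordPath σ l) (n * l.length) =
      stepWord (fun j => wordCurve σ l (j / n)) (n * l.length) := by
  refine stepWord_congr fun j hj => ?_
  rcases Nat.eq_zero_or_pos (n * l.length) with h0 | hpos
  · obtain rfl : j = 0 := by omega
    simp [wordCurve_of_nonpos]
  have hmem : (j : ℝ) / (n * l.length : ℕ) ∈ Icc (0 : ℝ) 1 :=
    ⟨by positivity, div_le_one_of_le₀ (by exact_mod_cast hj) (by positivity)⟩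
  rw [Path.extend_apply _ hmem]
  change wordCurve σ l (l.length * (j / (n * l.length : ℕ))) = _
  obtain ⟨hn, hl⟩ := Nat.mul_ne_zero_iff.1 hpos.ne'
  push_cast
  field_simp

theorem stepWord_wordCurve_cons (g : G) (l : List G) {n : ℕ} (hn : n ≠ 0) :
    stepWord (fun j => wordCurve σ (g :: l) (j / n)) (n * (g :: l).length) =
      pathWord (σ g) n ++ stepWord (fun j => wordCurve σ l (j / n)) (n * l.length) := by
  have hn' : (0 : ℝ) < n := by positivity
  rw [List.length_cons, Nat.mul_succ, Nat.add_comm (n * l.length) n, stepWord_add]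
  congr 1
  · refine stepWord_congr fun j hj => ?_
    have hj' : (j : ℝ) / n - 1 ≤ 0 :=
      sub_nonpos.2 (div_le_one_of_le₀ (by exact_mod_cast hj) hn'.le)
    simp only [wordCurve, wordCurve_of_nonpos σ l hj', mul_one]
  · refine (stepWord_congr fun j _ => ?_).trans (stepWord_mul_left g)
    have h1 : 1 ≤ ((n + j : ℕ) : ℝ) / n := by
      rw [le_div_iff₀ hn']
      push_cast
      linarith [(j.cast_nonneg : (0 : ℝ) ≤ j)]
    have h2 : ((n + j : ℕ) : ℝ) / n - 1 = j / n := by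
      push_cast
      field_simp
      ring
    simp only [wordCurve, (σ g).extend_of_one_le h1, h2]

theorem stepWord_wordCurve_wordEquiv {l : List G} {n : ℕ} (hn : n ≠ 0)
    (h : ∀ g ∈ l, WordEquiv U (pathWord (σ g) n) [g]) :
    WordEquiv U (stepWord (fun j => wordCurve σ l (j / n)) (n * l.length)) l := by
  induction l with
  | nil => rfl
  | cons g l ih =>
    rw [stepWord_wordCurve_cons σ g l hn]
    exact (h g List.mem_cons_self).append (ih fun g' hg' => h g' (List.mem_cons_of_mem g hg'))

end WordPath

theorem WordEquiv.prod_of_isPathConnected {G : Type*} [Group G] [TopologicalSpace G]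
    [IsTopologicalGroup G] [SimplyConnectedSpace G] {U : Set G} (hU : U ∈ 𝓝 1)
    (hUpc : IsPathConnected U) {l : List G} (hl : l ≠ []) (hlU : ∀ x ∈ l, x ∈ U)
    (hprod : l.prod ∈ U) : WordEquiv U l [l.prod] := by
  have hpaths (g : G) : ∃ γ : Path (1 : G) g, g ∈ U → ∀ t, γ t ∈ U := by
    by_cases hg : g ∈ U
    · exact ⟨_, fun _ => (hUpc.joinedIn 1 (mem_of_mem_nhds hU) g hg).somePath_mem⟩
    · exact ⟨(PathConnectedSpace.joined 1 g).somePath, fun h => absurd h hg⟩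
  choose σ hσ using hpaths
  obtain ⟨F⟩ := SimplyConnectedSpace.paths_homotopic (wordPath σ l) (σ l.prod)
  have hscale : Tendsto (· * l.length) atTop atTop :=
    tendsto_id.atTop_mul_const' (List.length_pos_iff.2 hl)
  have hletters : ∀ᶠ n in atTop, ∀ g ∈ {g | g ∈ l}, WordEquiv U (pathWord (σ g) n) [g] :=
    (eventually_all_finite l.finite_toSet).2 fun g hg =>
      eventually_pathWord_wordEquiv_singleton (σ g) (hσ g (hlU g hg)) hU
  obtain ⟨n, hn, hseg, hhom, hend⟩ := (eventually_ne_atTop 0 |>.and <| hletters.and <|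
    (hscale.eventually (eventually_pathWord_wordEquiv F hU)).and
    (hscale.eventually (eventually_pathWord_wordEquiv_singleton _ (hσ _ hprod) hU))).exists
  calc WordEquiv U l (stepWord (fun j => wordCurve σ l (j / n)) (n * l.length)) :=
        (stepWord_wordCurve_wordEquiv σ hn hseg).symm
    _ = pathWord (wordPath σ l) (n * l.length) := (pathWord_wordPath σ l n).symm
    WordEquiv U _ _ := hhom
    WordEquiv U _ _ := hend

theorem ModelWithCorners.locallyPathConnectedSpace {E : Type*} [NormedAddCommGroup E]
    [NormedSpace ℝ E] {H : Type*} [TopologicalSpace H] (I : ModelWithCorners ℝ E H) :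
    LocallyPathConnectedSpace H :=
  have := I.convex_range.locallyPathConnectedSpace
  I.isClosedEmbedding.isEmbedding.toHomeomorph.isOpenEmbedding.locallyPathConnectedSpace

/-- **Words over an open connected neighborhood of `1` in a simply connected Lie group
contract to their product.**
Let `G` be a simply connected Lie group and `U ⊆ G` an open connected subset containing `1`.
If `g₁, …, gₙ ∈ U` are such that `g = g₁ * ⋯ * gₙ ∈ U`, then the `U`-words `(g₁, …, gₙ)` and
`(g)` are equivalent. -/
theorem word_equiv_prod_of_simplyConnected
    {E : Type*} [NormedAddCommGroup E] [NormedSpace ℝ E]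
    {H : Type*} [TopologicalSpace H] (I : ModelWithCorners ℝ E H)
    {G : Type*} [TopologicalSpace G] [ChartedSpace H G] [Group G] [LieGroup I (⊤ : ℕ∞) G]
    [SimplyConnectedSpace G]
    (U : Set G) (hUopen : IsOpen U) (hUconn : IsConnected U) (h1U : (1 : G) ∈ U)
    (l : List G) (hl : l ≠ []) (hlU : ∀ x ∈ l, x ∈ U) (hprod : l.prod ∈ U) :
    WordEquiv U l [l.prod] := by
  have := topologicalGroup_of_lieGroup I (⊤ : ℕ∞) (G := G)
  have := I.locallyPathConnectedSpace
  have := ChartedSpace.locallyPathConnectedSpace H G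
  exact WordEquiv.prod_of_isPathConnected (hUopen.mem_nhds h1U)
    (hUopen.isConnected_iff_isPathConnected.1 hUconn) hl hlU hprod
end

section
/- Work in the exterior algebra of ℝ⁴ over ℝ, and let e₁, e₂, e₃, e₄ denote the images of the standard basis vectors of ℝ⁴ under the canonical inclusion. Set ω₀ = e₁∧e₂ + e₃∧e₄, ω₁ = −e₁∧e₂ − e₁∧e₃ + e₂∧e₄, and for t ∈ ℝ set ω_t = t • ω₁ + (1 − t) • ω₀. Then ω_t ∧ ω_t = (6t² − 6t + 2) • (e₁∧e₂∧e₃∧e₄), and in particular ω_t ∧ ω_t ≠ 0 for every t ∈ [0,1]. -/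
open ExteriorAlgebra

/-- The image of the `i`-th standard basis vector of `ℝ⁴` in the exterior algebra. -/
noncomputable def e (i : Fin 4) : ExteriorAlgebra ℝ (Fin 4 → ℝ) :=
  ExteriorAlgebra.ι ℝ (Pi.single i 1)

/-- The 2-form `ω₀ = e₁∧e₂ + e₃∧e₄`. -/
noncomputable def ω₀ : ExteriorAlgebra ℝ (Fin 4 → ℝ) :=
  e 0 * e 1 + e 2 * e 3

/-- The 2-form `ω₁ = −e₁∧e₂ − e₁∧e₃ + e₂∧e₄`. -/
noncomputable def ω₁ : ExteriorAlgebra ℝ (Fin 4 → ℝ) :=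
  -(e 0 * e 1) - e 0 * e 2 + e 1 * e 3

/-- The interpolation `ω_t = t • ω₁ + (1 − t) • ω₀`. -/
noncomputable def ω (t : ℝ) : ExteriorAlgebra ℝ (Fin 4 → ℝ) :=
  t • ω₁ + (1 - t) • ω₀

/-! ### Auxiliary material -/

namespace OmegaAux

/-- A quadruple product of generators is the fourfold `ιMulti`. -/
lemma quad (v : Fin 4 → (Fin 4 → ℝ)) :
    ι ℝ (v 0) * (ι ℝ (v 1) * (ι ℝ (v 2) * ι ℝ (v 3))) = ιMulti ℝ 4 v := by
  simp [ιMulti_apply, List.ofFn_succ, mul_assoc, Matrix.vecTail, Fin.succ]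

lemma quad' (a b c d : Fin 4 → ℝ) :
    ι ℝ a * (ι ℝ b * (ι ℝ c * ι ℝ d)) = ιMulti ℝ 4 ![a, b, c, d] := by
  rw [← quad]; simp

/-- The standard basis vectors of `ℝ⁴`. -/
noncomputable abbrev s (i : Fin 4) : Fin 4 → ℝ := Pi.single i 1

lemma z2 (a b c : Fin 4 → ℝ) : ιMulti ℝ 4 ![a, b, a, c] = 0 :=
  AlternatingMap.map_eq_zero_of_eq _ _ (i := 0) (j := 2) rfl (by decide)

lemma z3 (a b c : Fin 4 → ℝ) : ιMulti ℝ 4 ![a, b, c, b] = 0 :=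
  AlternatingMap.map_eq_zero_of_eq _ _ (i := 1) (j := 3) rfl (by decide)

lemma z4 (a b c : Fin 4 → ℝ) : ιMulti ℝ 4 ![a, b, c, a] = 0 :=
  AlternatingMap.map_eq_zero_of_eq _ _ (i := 0) (j := 3) rfl (by decide)

lemma z5 (a b c : Fin 4 → ℝ) : ιMulti ℝ 4 ![a, b, b, c] = 0 :=
  AlternatingMap.map_eq_zero_of_eq _ _ (i := 1) (j := 2) rfl (by decide)

/-- Swapping two entries of a quadruple changes the sign. -/
lemma swapv (a b c d : Fin 4 → ℝ) (i j : Fin 4) (h : i ≠ j)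
    (w : Fin 4 → (Fin 4 → ℝ)) (hw : ![a, b, c, d] ∘ Equiv.swap i j = w) :
    ιMulti ℝ 4 w = - ιMulti ℝ 4 ![a, b, c, d] := by
  rw [← hw]; exact AlternatingMap.map_swap _ _ h

/-- Abbreviation for the top form. -/
noncomputable abbrev E : ExteriorAlgebra ℝ (Fin 4 → ℝ) := ιMulti ℝ 4 ![s 0, s 1, s 2, s 3]

lemma hB : ιMulti ℝ 4 ![s 0, s 2, s 1, s 3] = -E := by
  refine swapv (s 0) (s 1) (s 2) (s 3) 1 2 (by decide) _ ?_
  funext i; fin_cases i <;> simp [Equiv.swap_apply_def]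

lemma step1 : ιMulti ℝ 4 ![s 2, s 1, s 0, s 3] = -E := by
  refine swapv (s 0) (s 1) (s 2) (s 3) 0 2 (by decide) _ ?_
  funext i; fin_cases i <;> simp [Equiv.swap_apply_def]

lemma hA : ιMulti ℝ 4 ![s 2, s 3, s 0, s 1] = E := by
  have h := swapv (s 2) (s 1) (s 0) (s 3) 1 3 (by decide)
      ![s 2, s 3, s 0, s 1] (by funext i; fin_cases i <;> simp [Equiv.swap_apply_def])
  rw [h, step1, neg_neg]

lemma step2 : ιMulti ℝ 4 ![s 1, s 2, s 0, s 3] = E := by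
  have h := swapv (s 2) (s 1) (s 0) (s 3) 0 1 (by decide)
      ![s 1, s 2, s 0, s 3] (by funext i; fin_cases i <;> simp [Equiv.swap_apply_def])
  rw [h, step1, neg_neg]

lemma hC : ιMulti ℝ 4 ![s 1, s 3, s 0, s 2] = -E := by
  have h := swapv (s 1) (s 2) (s 0) (s 3) 1 3 (by decide)
      ![s 1, s 3, s 0, s 2] (by funext i; fin_cases i <;> simp [Equiv.swap_apply_def])
  rw [h, step2]

lemma hE : e 0 * e 1 * e 2 * e 3 = E := by
  simp only [e, mul_assoc, quad']

lemma hw00 : ω₀ * ω₀ = (2 : ℝ) • E := by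
  simp only [ω₀, e, add_mul, mul_add, mul_assoc, quad', z2, z3, z4, z5, hA]
  module

lemma hw11 : ω₁ * ω₁ = (2 : ℝ) • E := by
  simp only [ω₁, e, add_mul, mul_add, sub_mul, mul_sub, neg_mul, mul_neg, mul_assoc, quad',
    z2, z3, z4, z5, hB, hC]
  module

lemma hw01 : ω₀ * ω₁ = (-1 : ℝ) • E := by
  simp only [ω₀, ω₁, e, add_mul, mul_add, sub_mul, mul_sub, neg_mul, mul_neg, mul_assoc, quad',
    z2, z3, z4, z5, hA]
  module

lemma hw10 : ω₁ * ω₀ = (-1 : ℝ) • E := by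
  simp only [ω₀, ω₁, e, add_mul, mul_add, sub_mul, mul_sub, neg_mul, mul_neg, mul_assoc, quad',
    z2, z3, z4, z5, hA]
  module

/-- The family of alternating maps used to detect the top form: the determinant in degree 4. -/
noncomputable def detF : ∀ i : ℕ, (Fin 4 → ℝ) [⋀^Fin i]→ₗ[ℝ] ℝ :=
  fun i => match i with
  | 4 => Matrix.detRowAlternating
  | _ => 0

lemma E_ne : E ≠ 0 := by
  intro h
  have h2 := congrArg (liftAlternating (R := ℝ) detF) h
  rw [liftAlternating_apply_ιMulti, map_zero] at h2
  have h3 : detF 4 ![s 0, s 1, s 2, s 3] = Matrix.det (Matrix.of ![s 0, s 1, s 2, s 3]) := rfl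
  rw [h3] at h2
  have h4 : (Matrix.of ![s 0, s 1, s 2, s 3]) = (1 : Matrix (Fin 4) (Fin 4) ℝ) := by
    ext i j
    fin_cases i <;> fin_cases j <;>
      simp [Matrix.one_apply, Pi.single_apply, Matrix.vecHead, Matrix.vecTail]
  rw [h4, Matrix.det_one] at h2
  exact one_ne_zero h2

end OmegaAux

open OmegaAux in
/-- **The interpolated forms are nondegenerate.**
`ω_t ∧ ω_t = (6t² − 6t + 2) • (e₁∧e₂∧e₃∧e₄)`, and in particular `ω_t ∧ ω_t ≠ 0` for every
`t ∈ [0, 1]`. -/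
theorem omega_wedge_self :
    (∀ t : ℝ, ω t * ω t = (6 * t ^ 2 - 6 * t + 2) • (e 0 * e 1 * e 2 * e 3)) ∧
      ∀ t ∈ Set.Icc (0 : ℝ) 1, ω t * ω t ≠ 0 := by
  have key : ∀ t : ℝ, ω t * ω t = (6 * t ^ 2 - 6 * t + 2) • (e 0 * e 1 * e 2 * e 3) := by
    intro t
    rw [hE, ω]
    simp only [mul_add, add_mul, smul_mul_assoc, mul_smul_comm, hw00, hw11, hw01, hw10]
    module
  refine ⟨key, fun t ht h => ?_⟩
  rw [key t, hE] at h
  have hc : 6 * t ^ 2 - 6 * t + 2 ≠ 0 := by nlinarith [sq_nonneg (2 * t - 1)]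
  exact E_ne (by simpa [hc] using (smul_eq_zero.mp h))
end
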